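/- Let n, k ≥ 1 and α, β ∈ {1,…,k}ⁿ. If the sorted rearrangement of α is strictly smaller than the sorted rearrangement of β in the lexicographic order, then there exists an index i with α_i < β_i. -/

import Mathlib

/-- The non-decreasing (sorted) rearrangement of a tuple. -/
def nd {n k : ℕ} (α : Fin n → Fin k) : Fin n → Fin k := α ∘ Tuple.sort α

/-- Lexicographic strict order on tuples: they agree before `i` and `α i < β i`. -/
def lexLt {n k : ℕ} (α β : Fin n → Fin k) : Prop :=
  ∃ i, (∀ j, j < i → α j = β j) ∧ α i < β i

open Finset

theorem Finset.card_filter_univ_comp_perm {ι : Type*} [Fintype ι] (σ : Equiv.Perm ι)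
    (p : ι → Prop) [DecidablePred p] : #{i | p (σ i)} = #{i | p i} :=
  card_equiv σ (by simp)

/-- The `j`-th entry of a sorted tuple is `≤ a` iff more than `j` entries are `≤ a`, and lowering
entries pointwise can only increase these counts. -/
theorem Tuple.comp_sort_le_comp_sort {n : ℕ} {α : Type*} [LinearOrder α] {f g : Fin n → α}
    (h : f ≤ g) : f ∘ Tuple.sort f ≤ g ∘ Tuple.sort g := by
  intro j
  set a := (g ∘ Tuple.sort g) j
  have hj : j < #{i | (g ∘ Tuple.sort g) i ≤ a} :=
    (Tuple.lt_card_le_iff_apply_le_of_monotone (Tuple.monotone_sort g)).mpr le_rfl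
  refine (Tuple.lt_card_le_iff_apply_le_of_monotone (Tuple.monotone_sort f)).mp ?_
  calc (j : ℕ) < #{i | g (Tuple.sort g i) ≤ a} := hj
    _ = #{i | g i ≤ a} := card_filter_univ_comp_perm _ (g · ≤ a)
    _ ≤ #{i | f i ≤ a} := card_le_card fun i => by simpa using (h i).trans
    _ = #{i | f (Tuple.sort f i) ≤ a} := (card_filter_univ_comp_perm _ (f · ≤ a)).symm

theorem stmt4_general (n k : ℕ) (α β : Fin n → Fin k)
    (h : lexLt (nd α) (nd β)) : ∃ i, α i < β i := by
  by_contra! hle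
  obtain ⟨i, -, hi⟩ := h
  exact (Tuple.comp_sort_le_comp_sort hle i).not_gt hi

/-- If `nd α <_lex nd β`, then `α i < β i` for some `i`. -/
theorem stmt4 (n k : ℕ) (hn : 1 ≤ n) (hk : 1 ≤ k) (α β : Fin n → Fin k)
    (h : lexLt (nd α) (nd β)) : ∃ i, α i < β i :=
  stmt4_general n k α β h
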